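/- If (Q,T) is separable and |Q| equals the Myhill–Nerode index of the regular language L, then (Q,T) is closed and the hypothesis automaton H recognizes exactly L. -/

import Mathlib

/-!
Since `Q` is separable, any two distinct access words are `T`-inequivalent, hence
Nerode-inequivalent; with `|Q|` equal to the Nerode index, `Q` meets every Nerode class
exactly once. So `q ++ [a]` has a Nerode-equivalent representative in `Q`, which is
`T`-equivalent to it (closedness), and by separability it is the only element of `Q`
`T`-equivalent to `q ++ [a]`. Hence every transition of `H` stays within the Nerode class
of the word read so far, and `H` accepts `w` iff `w ∈ L`.
-/

/-- `v` and `w` are `T`-equivalent w.r.t. language `L`. -/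
def TEquiv {α : Type*} (L : Set (List α)) (T : Set (List α)) (v w : List α) : Prop :=
  ∀ u ∈ T, (v ++ u ∈ L ↔ w ++ u ∈ L)

def IsNerodeClassifier {α β : Type*} (L : Set (List α)) (c : List α → β) : Prop :=
  ∀ v w : List α, c v = c w ↔ ∀ u : List α, (v ++ u ∈ L ↔ w ++ u ∈ L)

def IsSeparableAccessSet {α : Type*} (L T Q : Set (List α)) : Prop :=
  ∀ v ∈ Q, ∀ w ∈ Q, TEquiv L T v w → v = w

namespace TEquiv

variable {α : Type*} {L T : Set (List α)} {u v w : List α}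

theorem symm (h : TEquiv L T v w) : TEquiv L T w v := fun x hx => (h x hx).symm

theorem trans (h₁ : TEquiv L T u v) (h₂ : TEquiv L T v w) : TEquiv L T u w :=
  fun x hx => (h₁ x hx).trans (h₂ x hx)

end TEquiv

namespace IsNerodeClassifier

variable {α β : Type*} {L T Q : Set (List α)} {c : List α → β} {v w : List α}

theorem tEquiv (hc : IsNerodeClassifier L c) (h : c v = c w) : TEquiv L T v w :=
  fun u _ => (hc v w).1 h u

theorem append_right (hc : IsNerodeClassifier L c) (h : c v = c w) (x : List α) :
    c (v ++ x) = c (w ++ x) :=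
  (hc _ _).2 fun u => by simpa only [List.append_assoc] using (hc v w).1 h (x ++ u)

theorem mem_iff (hc : IsNerodeClassifier L c) (h : c v = c w) : v ∈ L ↔ w ∈ L := by
  simpa only [List.append_nil] using (hc v w).1 h []

theorem injOn (hc : IsNerodeClassifier L c) (hsep : IsSeparableAccessSet L T Q) :
    Set.InjOn c Q :=
  fun v hv w hw h => hsep v hv w hw (hc.tEquiv h)

theorem surjOn_univ [Fintype β] {Q : Finset (List α)} (hc : IsNerodeClassifier L c)
    (hsep : IsSeparableAccessSet L T Q) (hcard : Q.card = Fintype.card β) :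
    Set.SurjOn c Q Set.univ := by
  simpa using Finset.surjOn_of_injOn_of_card_le (t := Finset.univ) c
    (fun _ _ => Finset.mem_coe.2 (Finset.mem_univ _)) (hc.injOn hsep) (by simp [hcard])

theorem eq_of_tEquiv (hc : IsNerodeClassifier L c) (hsep : IsSeparableAccessSet L T Q)
    (hsurj : Set.SurjOn c Q Set.univ) {q x : List α} (hq : q ∈ Q) (h : TEquiv L T x q) :
    c q = c x := by
  obtain ⟨q', hq', hcq'⟩ := hsurj (Set.mem_univ (c x))
  obtain rfl : q' = q := hsep q' hq' q hq ((hc.tEquiv hcq').trans h)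
  exact hcq'

theorem foldl_mem_and_eq (hc : IsNerodeClassifier L c) (hsep : IsSeparableAccessSet L T Q)
    (hsurj : Set.SurjOn c Q Set.univ) (hεQ : ([] : List α) ∈ Q)
    {δ : List α → α → List α}
    (hδ : ∀ q ∈ Q, ∀ a : α, δ q a ∈ Q ∧ TEquiv L T (q ++ [a]) (δ q a))
    (w : List α) : List.foldl δ [] w ∈ Q ∧ c (List.foldl δ [] w) = c w := by
  induction w using List.reverseRecOn with
  | nil => exact ⟨hεQ, rfl⟩
  | append_singleton w a ih =>
    obtain ⟨hq, hcq⟩ := ih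
    obtain ⟨hδQ, hδT⟩ := hδ _ hq a
    rw [List.foldl_concat]
    exact ⟨hδQ, (hc.eq_of_tEquiv hsep hsurj hδQ hδT).trans (hc.append_right hcq [a])⟩

end IsNerodeClassifier

theorem full_access_set_gives_correct_hypothesis_general {α : Type*}
    (L : Set (List α)) (Q : Finset (List α)) (T : Set (List α))
    (hεQ : ([] : List α) ∈ Q)
    (hsep : ∀ v ∈ Q, ∀ w ∈ Q, TEquiv L T v w → v = w)
    (n : ℕ) (c : List α → Fin n)
    (hc : ∀ v w : List α, c v = c w ↔ ∀ u : List α, (v ++ u ∈ L ↔ w ++ u ∈ L))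
    (hcard : Q.card = n) :
    (∀ q ∈ Q, ∀ a : α, ∃ q' ∈ Q, TEquiv L T (q ++ [a]) q') ∧
    (∀ δ : List α → α → List α,
      (∀ q ∈ Q, ∀ a : α, δ q a ∈ Q ∧ TEquiv L T (q ++ [a]) (δ q a)) →
      ∀ w : List α, (List.foldl δ [] w ∈ L ↔ w ∈ L)) := by
  have hc : IsNerodeClassifier L c := hc
  have hsep : IsSeparableAccessSet L T Q := hsep
  have hsurj : Set.SurjOn c Q Set.univ := hc.surjOn_univ hsep (by rw [hcard, Fintype.card_fin])
  refine ⟨fun q _ a => ?_, fun δ hδ w => ?_⟩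
  · obtain ⟨q', hq', hcq'⟩ := hsurj (Set.mem_univ (c (q ++ [a])))
    exact ⟨q', hq', (hc.tEquiv hcq').symm⟩
  · exact hc.mem_iff (hc.foldl_mem_and_eq hsep hsurj hεQ hδ w).2

/-- If `(Q, T)` is separable with `ε ∈ Q ∩ T` and `|Q|` equals the Myhill–Nerode
index `n` of the regular language `L` (given by a classifying map
`c : Σ* → Fin n` with `c v = c w` iff `v ≡_L w`), then `(Q, T)` is closed, and
the hypothesis automaton `H` (states `Q`, initial state `ε`, transitions to the
unique `T`-equivalent access word, accepting states `{q ∈ Q | q ∈ L}`) recognizes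
exactly `L`: for every word `w`, the run of `H` on `w` ends in an accepting state
iff `w ∈ L`. -/
theorem full_access_set_gives_correct_hypothesis {α : Type*}
    (L : Set (List α)) (Q : Finset (List α)) (T : Set (List α))
    (hεQ : ([] : List α) ∈ Q) (hεT : ([] : List α) ∈ T)
    (hsep : ∀ v ∈ Q, ∀ w ∈ Q, TEquiv L T v w → v = w)
    (n : ℕ) (c : List α → Fin n)
    (hc : ∀ v w : List α, c v = c w ↔ ∀ u : List α, (v ++ u ∈ L ↔ w ++ u ∈ L))
    (hcard : Q.card = n) :
    (∀ q ∈ Q, ∀ a : α, ∃ q' ∈ Q, TEquiv L T (q ++ [a]) q') ∧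
    (∀ δ : List α → α → List α,
      (∀ q ∈ Q, ∀ a : α, δ q a ∈ Q ∧ TEquiv L T (q ++ [a]) (δ q a)) →
      ∀ w : List α, (List.foldl δ [] w ∈ L ↔ w ∈ L)) :=
  full_access_set_gives_correct_hypothesis_general L Q T hεQ hsep n c hc hcard
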